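/- arXiv:2310.07445 — 3 statements merged into one kernel-verified Lean document; each statement's English description precedes it below -/
import Mathlib

section
/- Let $G$ be a graph obtained as a $k$-clique-sum of vertex-disjoint graphs $G_1$ and $G_2$ with $k \ge 1$, let $K = \{v_1, \dots, v_k\}$ be their common clique, and set $G_i' = G_i \cap G$ for $i = 1, 2$. Suppose $G_1'$ has an AT-orientation $D_1'$ with $\Delta^+(D_1') \le \ell$, and $G_2$ has an AT-orientation $D_2$ with $\Delta^+(D_2) \le \ell$ and $d_{D_2}^+(v_i) = i - 1$ for each $i = 1, \dots, k$. Then $G$ has an AT-orientation $D$ such that $\Delta^+(D) \le \ell$ and $d_D^+(v) = d_{D_1'}^+(v)$ for every vertex $v \in V(G_1)$. -/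
/-- `D` (a finite set of arcs) is an orientation of the graph `G`:
every edge of `G` gets exactly one direction, and there are no other arcs. -/
def IsOrientation {V : Type*} (G : SimpleGraph V) (D : Finset (V × V)) : Prop :=
  ∀ x y : V, (G.Adj x y ↔ ((x, y) ∈ D ∨ (y, x) ∈ D)) ∧ ¬((x, y) ∈ D ∧ (y, x) ∈ D)

/-- The out-degree of a vertex in a digraph given by its arc set. -/
def outDeg {V : Type*} [DecidableEq V] (D : Finset (V × V)) (x : V) : ℕ :=
  (D.filter fun p => p.1 = x).card

/-- The in-degree of a vertex in a digraph given by its arc set. -/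
def inDeg {V : Type*} [DecidableEq V] (D : Finset (V × V)) (x : V) : ℕ :=
  (D.filter fun p => p.2 = x).card

/-- `H` is an Eulerian (spanning) subdigraph of `D`: a subset of the arcs such that
in-degree equals out-degree at every vertex. -/
def IsEulerianSub {V : Type*} [DecidableEq V] (D H : Finset (V × V)) : Prop :=
  H ⊆ D ∧ ∀ x, outDeg H x = inDeg H x

/-- The set of Eulerian subdigraphs of `D` with an even number of arcs. -/
def EE {V : Type*} [DecidableEq V] (D : Finset (V × V)) : Set (Finset (V × V)) :=
  {H | IsEulerianSub D H ∧ Even H.card}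

/-- The set of Eulerian subdigraphs of `D` with an odd number of arcs. -/
def OE {V : Type*} [DecidableEq V] (D : Finset (V × V)) : Set (Finset (V × V)) :=
  {H | IsEulerianSub D H ∧ Odd H.card}

/-- `D` is an AT-orientation if `|EE(D)| ≠ |OE(D)|`. -/
def IsATOrientation {V : Type*} [DecidableEq V] (D : Finset (V × V)) : Prop :=
  (EE D).ncard ≠ (OE D).ncard

/-- A digraph is acyclic if it has no (nontrivial) closed directed walk. -/
def IsAcyclicOrientation {V : Type*} (D : Finset (V × V)) : Prop :=
  ¬ ∃ (n : ℕ) (c : ℕ → V), 0 < n ∧ c n = c 0 ∧ ∀ i < n, (c i, c (i + 1)) ∈ D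

/-- The Alon–Tarsi number of `G`: the least `k` such that `G` has an
AT-orientation with all out-degrees less than `k`. -/
noncomputable def alonTarsiNumber {V : Type*} [DecidableEq V] (G : SimpleGraph V) : ℕ :=
  sInf {k | ∃ D : Finset (V × V),
    IsOrientation G D ∧ IsATOrientation D ∧ ∀ x, outDeg D x < k}


section CliqueSumHelpers

open Finset

variable {V : Type*} [DecidableEq V]


lemma outDeg_mono {A B : Finset (V × V)} (h : A ⊆ B) (x : V) : outDeg A x ≤ outDeg B x :=
  Finset.card_le_card (Finset.filter_subset_filter _ h)

lemma outDeg_union {A B : Finset (V × V)} (h : Disjoint A B) (x : V) :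
    outDeg (A ∪ B) x = outDeg A x + outDeg B x := by
  unfold outDeg
  rw [Finset.filter_union, Finset.card_union_of_disjoint]
  exact Finset.disjoint_filter_filter h

lemma inDeg_union {A B : Finset (V × V)} (h : Disjoint A B) (x : V) :
    inDeg (A ∪ B) x = inDeg A x + inDeg B x := by
  unfold inDeg
  rw [Finset.filter_union, Finset.card_union_of_disjoint]
  exact Finset.disjoint_filter_filter h

lemma outDeg_eq_zero {A : Finset (V × V)} {x : V} (h : ∀ p ∈ A, p.1 ≠ x) : outDeg A x = 0 := by
  unfold outDeg
  rw [Finset.card_eq_zero, Finset.filter_eq_empty_iff]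
  exact h

lemma inDeg_eq_zero {A : Finset (V × V)} {x : V} (h : ∀ p ∈ A, p.2 ≠ x) : inDeg A x = 0 := by
  unfold inDeg
  rw [Finset.card_eq_zero, Finset.filter_eq_empty_iff]
  exact h

lemma sum_outDeg [Fintype V] (H : Finset (V × V)) : ∑ x, outDeg H x = H.card :=
  (Finset.card_eq_sum_card_fiberwise (fun p _ => Finset.mem_univ p.1)).symm

lemma sum_inDeg [Fintype V] (H : Finset (V × V)) : ∑ x, inDeg H x = H.card :=
  (Finset.card_eq_sum_card_fiberwise (fun p _ => Finset.mem_univ p.2)).symm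

lemma balance_weight [Fintype V] (H : Finset (V × V)) (hb : ∀ x, outDeg H x = inDeg H x)
    (g : V → ℕ) : ∑ p ∈ H, g p.1 = ∑ p ∈ H, g p.2 := by
  have h1 : ∑ p ∈ H, g p.1 = ∑ x, (outDeg H x) * g x := by
    rw [← Finset.sum_fiberwise_of_maps_to (fun p (_ : p ∈ H) => Finset.mem_univ p.1) (fun p => g p.1)]
    refine Finset.sum_congr rfl fun x _ => ?_
    calc ∑ p ∈ H.filter (fun i => i.1 = x), g p.1
        = ∑ _p ∈ H.filter (fun i => i.1 = x), g x :=
          Finset.sum_congr rfl (fun p hp => by rw [(Finset.mem_filter.mp hp).2])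
      _ = outDeg H x * g x := by rw [Finset.sum_const, smul_eq_mul]; rfl
  have h2 : ∑ p ∈ H, g p.2 = ∑ x, (inDeg H x) * g x := by
    rw [← Finset.sum_fiberwise_of_maps_to (fun p (_ : p ∈ H) => Finset.mem_univ p.2) (fun p => g p.2)]
    refine Finset.sum_congr rfl fun x _ => ?_
    calc ∑ p ∈ H.filter (fun i => i.2 = x), g p.2
        = ∑ _p ∈ H.filter (fun i => i.2 = x), g x :=
          Finset.sum_congr rfl (fun p hp => by rw [(Finset.mem_filter.mp hp).2])
      _ = inDeg H x * g x := by rw [Finset.sum_const, smul_eq_mul]; rfl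
  rw [h1, h2]
  exact Finset.sum_congr rfl fun x _ => by rw [hb x]


lemma diff_balanced {H H₂ : Finset (V × V)} (hsub : H₂ ⊆ H)
    (hbH : ∀ x, outDeg H x = inDeg H x) (hb2 : ∀ x, outDeg H₂ x = inDeg H₂ x) :
    ∀ x, outDeg (H \ H₂) x = inDeg (H \ H₂) x := by
  intro x
  have hu : (H \ H₂) ∪ H₂ = H := Finset.sdiff_union_of_subset hsub
  have hd : Disjoint (H \ H₂) H₂ := Finset.sdiff_disjoint
  have h1 := outDeg_union hd x
  have h2 := inDeg_union hd x
  rw [hu] at h1 h2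
  have := hbH x
  have := hb2 x
  omega

/-- Eulerian subdigraphs as a Finset. -/
def ESf {V : Type*} [Fintype V] [DecidableEq V] (D : Finset (V × V)) : Finset (Finset (V × V)) :=
  D.powerset.filter (fun H => ∀ x, outDeg H x = inDeg H x)

lemma mem_ESf [Fintype V] {D H : Finset (V × V)} :
    H ∈ ESf D ↔ H ⊆ D ∧ ∀ x, outDeg H x = inDeg H x := by
  simp [ESf]

lemma EE_ncard [Fintype V] (D : Finset (V × V)) :
    (EE D).ncard = ((ESf D).filter (fun H => Even H.card)).card := by
  rw [show EE D = ↑((ESf D).filter (fun H => Even H.card)) from ?_, Set.ncard_coe_finset]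
  ext H
  simp [EE, IsEulerianSub, mem_ESf, and_assoc]

lemma OE_ncard [Fintype V] (D : Finset (V × V)) :
    (OE D).ncard = ((ESf D).filter (fun H => ¬ Even H.card)).card := by
  rw [show OE D = ↑((ESf D).filter (fun H => ¬ Even H.card)) from ?_, Set.ncard_coe_finset]
  ext H
  simp [OE, IsEulerianSub, mem_ESf, and_assoc, ← Nat.not_even_iff_odd]


lemma split_balanced [Fintype V] {H₂ H : Finset (V × V)} {W : Finset V}
    (hcases : ∀ x ∉ W, (outDeg H₂ x = outDeg H x ∧ inDeg H₂ x = inDeg H x) ∨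
      (outDeg H₂ x = 0 ∧ inDeg H₂ x = 0))
    (hW : ∀ x ∈ W, outDeg H₂ x = 0)
    (hbal : ∀ x, outDeg H x = inDeg H x) :
    ∀ x, outDeg H₂ x = inDeg H₂ x := by
  have hoff : ∀ x ∈ Wᶜ, outDeg H₂ x = inDeg H₂ x := by
    intro x hx
    rcases hcases x (Finset.mem_compl.mp hx) with ⟨h1, h2⟩ | ⟨h1, h2⟩
    · rw [h1, h2]; exact hbal x
    · rw [h1, h2]
  have hsum : ∑ x ∈ W, outDeg H₂ x + ∑ x ∈ Wᶜ, outDeg H₂ x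
      = ∑ x ∈ W, inDeg H₂ x + ∑ x ∈ Wᶜ, inDeg H₂ x := by
    rw [Finset.sum_add_sum_compl, Finset.sum_add_sum_compl, sum_outDeg, sum_inDeg]
  have h0 : ∑ x ∈ W, outDeg H₂ x = 0 := Finset.sum_eq_zero hW
  have hc : ∑ x ∈ Wᶜ, outDeg H₂ x = ∑ x ∈ Wᶜ, inDeg H₂ x := Finset.sum_congr rfl hoff
  have hin0 : ∑ x ∈ W, inDeg H₂ x = 0 := by omega
  intro x
  by_cases hx : x ∈ W
  · rw [hW x hx, (Finset.sum_eq_zero_iff.mp hin0) x hx]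
  · exact hoff x (Finset.mem_compl.mpr hx)


lemma outDeg_filter_split {V : Type*} [DecidableEq V] (s : Finset (V × V))
    (p : V × V → Prop) [DecidablePred p] (x : V) :
    outDeg (s.filter p) x + outDeg (s.filter fun a => ¬ p a) x = outDeg s x := by
  rw [← outDeg_union (Finset.disjoint_filter_filter_not s s p),
    Finset.filter_union_filter_not_eq]

lemma inDeg_filter_split {V : Type*} [DecidableEq V] (s : Finset (V × V))
    (p : V × V → Prop) [DecidablePred p] (x : V) :
    inDeg (s.filter p) x + inDeg (s.filter fun a => ¬ p a) x = inDeg s x := by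
  rw [← inDeg_union (Finset.disjoint_filter_filter_not s s p),
    Finset.filter_union_filter_not_eq]

variable [Fintype V]

lemma AT_union {A B : Finset (V × V)} (hd : Disjoint A B)
    (hsplit : ∀ H, H ⊆ A ∪ B → (∀ x, outDeg H x = inDeg H x) →
      ∀ x, outDeg (H ∩ B) x = inDeg (H ∩ B) x)
    (hA : IsATOrientation A) (hB : IsATOrientation B) : IsATOrientation (A ∪ B) := by
  classical
  -- abbreviations
  set eA := ((ESf A).filter (fun H => Even H.card)).card with heA
  set oA := ((ESf A).filter (fun H => ¬ Even H.card)).card with hoA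
  set eB := ((ESf B).filter (fun H => Even H.card)).card with heB
  set oB := ((ESf B).filter (fun H => ¬ Even H.card)).card with hoB
  -- basic structure of Eulerian subdigraphs of A ∪ B
  have key : ∀ H ∈ ESf (A ∪ B), (H ∩ A) ∈ ESf A ∧ (H ∩ B) ∈ ESf B ∧
      (H ∩ A) ∪ (H ∩ B) = H := by
    intro H hH
    obtain ⟨hsub, hbal⟩ := mem_ESf.mp hH
    have hHB : ∀ x, outDeg (H ∩ B) x = inDeg (H ∩ B) x := hsplit H hsub hbal
    have hunion : (H ∩ A) ∪ (H ∩ B) = H := by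
      rw [← Finset.inter_union_distrib_left]
      exact Finset.inter_eq_left.mpr hsub
    have hHA_eq : H ∩ A = H \ (H ∩ B) := by
      ext p
      simp only [Finset.mem_inter, Finset.mem_sdiff, Finset.mem_inter]
      constructor
      · rintro ⟨hp, hpA⟩
        exact ⟨hp, fun ⟨_, hpB⟩ => (Finset.disjoint_left.mp hd hpA) hpB⟩
      · rintro ⟨hp, hn⟩
        refine ⟨hp, ?_⟩
        rcases Finset.mem_union.mp (hsub hp) with h | h
        · exact h
        · exact absurd ⟨hp, h⟩ hn
    refine ⟨mem_ESf.mpr ⟨Finset.inter_subset_right, ?_⟩,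
      mem_ESf.mpr ⟨Finset.inter_subset_right, hHB⟩, hunion⟩
    rw [hHA_eq]
    exact diff_balanced Finset.inter_subset_left hbal hHB
  have key2 : ∀ HA ∈ ESf A, ∀ HB ∈ ESf B, (HA ∪ HB) ∈ ESf (A ∪ B) ∧
      (HA ∪ HB) ∩ A = HA ∧ (HA ∪ HB) ∩ B = HB ∧ (HA ∪ HB).card = HA.card + HB.card := by
    intro HA hHA HB hHB
    obtain ⟨hsA, hbA⟩ := mem_ESf.mp hHA
    obtain ⟨hsB, hbB⟩ := mem_ESf.mp hHB
    have hdab : Disjoint HA HB := hd.mono hsA hsB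
    refine ⟨mem_ESf.mpr ⟨Finset.union_subset_union hsA hsB, fun x => by
      rw [outDeg_union hdab, inDeg_union hdab, hbA x, hbB x]⟩, ?_, ?_,
      Finset.card_union_of_disjoint hdab⟩
    · ext p
      simp only [Finset.mem_inter, Finset.mem_union]
      constructor
      · rintro ⟨h | h, hpA⟩
        · exact h
        · exact absurd hpA (Finset.disjoint_right.mp hd (hsB h))
      · intro h
        exact ⟨Or.inl h, hsA h⟩
    · ext p
      simp only [Finset.mem_inter, Finset.mem_union]
      constructor
      · rintro ⟨h | h, hpB⟩
        · exact absurd hpB (Finset.disjoint_left.mp hd (hsA h))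
        · exact h
      · intro h
        exact ⟨Or.inr h, hsB h⟩
  -- bijections for parities
  have count : ∀ (pr : ℕ → Prop) [DecidablePred pr],
      (((ESf (A ∪ B)).filter (fun H => pr H.card)).card) =
      (((ESf A ×ˢ ESf B).filter
        (fun P => pr (P.1.card + P.2.card))).card) := by
    intro pr _
    apply Finset.card_bij' (fun H _ => (H ∩ A, H ∩ B)) (fun P _ => P.1 ∪ P.2)
    · intro H hH
      simp only [Finset.mem_filter] at hH ⊢
      obtain ⟨h1, h2⟩ := hH
      obtain ⟨hA', hB', hu⟩ := key H h1
      have hdab : Disjoint (H ∩ A) (H ∩ B) :=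
        hd.mono Finset.inter_subset_right Finset.inter_subset_right
      have : (H ∩ A).card + (H ∩ B).card = H.card := by
        rw [← Finset.card_union_of_disjoint hdab, hu]
      refine ⟨Finset.mem_product.mpr ⟨hA', hB'⟩, by rw [this]; exact h2⟩
    · intro P hP
      simp only [Finset.mem_filter] at hP ⊢
      obtain ⟨h1, h2⟩ := hP
      obtain ⟨hPA, hPB⟩ := Finset.mem_product.mp h1
      obtain ⟨hmem, _, _, hcard⟩ := key2 _ hPA _ hPB
      exact ⟨hmem, by rw [hcard]; exact h2⟩
    · intro H hH
      simp only [Finset.mem_filter] at hH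
      exact (key H hH.1).2.2
    · intro P hP
      simp only [Finset.mem_filter] at hP
      obtain ⟨hPA, hPB⟩ := Finset.mem_product.mp hP.1
      obtain ⟨_, h1, h2, _⟩ := key2 _ hPA _ hPB
      exact Prod.ext h1 h2
  have prodEven : (ESf A ×ˢ ESf B).filter (fun P => Even (P.1.card + P.2.card)) =
      ((ESf A).filter (fun H => Even H.card) ×ˢ (ESf B).filter (fun H => Even H.card)) ∪
      ((ESf A).filter (fun H => ¬ Even H.card) ×ˢ (ESf B).filter (fun H => ¬ Even H.card)) := by
    ext P
    simp only [Finset.mem_filter, Finset.mem_union, Finset.mem_product, Nat.even_add]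
    tauto
  have prodOdd : (ESf A ×ˢ ESf B).filter (fun P => ¬ Even (P.1.card + P.2.card)) =
      ((ESf A).filter (fun H => Even H.card) ×ˢ (ESf B).filter (fun H => ¬ Even H.card)) ∪
      ((ESf A).filter (fun H => ¬ Even H.card) ×ˢ (ESf B).filter (fun H => Even H.card)) := by
    ext P
    simp only [Finset.mem_filter, Finset.mem_union, Finset.mem_product, Nat.even_add]
    tauto
  have dis1 : Disjoint
      ((ESf A).filter (fun H => Even H.card) ×ˢ (ESf B).filter (fun H => Even H.card))
      ((ESf A).filter (fun H => ¬ Even H.card) ×ˢ (ESf B).filter (fun H => ¬ Even H.card)) := by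
    rw [Finset.disjoint_left]
    intro P h1 h2
    rw [Finset.mem_product, Finset.mem_filter, Finset.mem_filter] at h1 h2
    exact h2.1.2 h1.1.2
  have dis2 : Disjoint
      ((ESf A).filter (fun H => Even H.card) ×ˢ (ESf B).filter (fun H => ¬ Even H.card))
      ((ESf A).filter (fun H => ¬ Even H.card) ×ˢ (ESf B).filter (fun H => Even H.card)) := by
    rw [Finset.disjoint_left]
    intro P h1 h2
    rw [Finset.mem_product, Finset.mem_filter, Finset.mem_filter] at h1 h2
    exact h2.1.2 h1.1.2
  have hEEcard : (EE (A ∪ B)).ncard = eA * eB + oA * oB := by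
    rw [EE_ncard, count (fun n => Even n), prodEven, Finset.card_union_of_disjoint dis1,
      Finset.card_product, Finset.card_product]
  have hOEcard : (OE (A ∪ B)).ncard = eA * oB + oA * eB := by
    rw [OE_ncard, count (fun n => ¬ Even n), prodOdd, Finset.card_union_of_disjoint dis2,
      Finset.card_product, Finset.card_product]
  have hA' : eA ≠ oA := by rwa [IsATOrientation, EE_ncard, OE_ncard] at hA
  have hB' : eB ≠ oB := by rwa [IsATOrientation, EE_ncard, OE_ncard] at hB
  intro hcon
  rw [hEEcard, hOEcard] at hcon
  have hz : ((eA : ℤ) - oA) * ((eB : ℤ) - oB) = 0 := by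
    have : (eA : ℤ) * eB + oA * oB = eA * oB + oA * eB := by exact_mod_cast hcon
    ring_nf
    linarith
  rcases mul_eq_zero.mp hz with h | h
  · exact hA' (by exact_mod_cast sub_eq_zero.mp h)
  · exact hB' (by exact_mod_cast sub_eq_zero.mp h)


end CliqueSumHelpers

/-- **Clique-sum lemma.** Let `G` be a `k`-clique-sum (`k ≥ 1`) of graphs `G₁`, `G₂`,
living on vertex sets `S₁`, `S₂` inside a common vertex type, with common clique
`K = {v 0, …, v (k-1)} = S₁ ∩ S₂` (possibly some clique edges deleted in `G`),
and let `Gᵢ' = Gᵢ ∩ G`. If `G₁' (= G ⊓ G₁)` has an AT-orientation `D₁'` with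
`Δ⁺(D₁') ≤ ℓ`, and `G₂` has an AT-orientation `D₂` with `Δ⁺(D₂) ≤ ℓ` and
`d⁺_{D₂}(v i) = i` for `i = 0, …, k-1`, then `G` has an AT-orientation `D` with
`Δ⁺(D) ≤ ℓ` and `d⁺_D(x) = d⁺_{D₁'}(x)` for every vertex `x` of `G₁`. -/
theorem cliqueSum_ATOrientation {V : Type*} [Fintype V] [DecidableEq V]
    (k ℓ : ℕ) (hk : 1 ≤ k)
    (G G₁ G₂ : SimpleGraph V) (S₁ S₂ : Set V) (v : Fin k → V)
    (hv : Function.Injective v)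
    (hcover : S₁ ∪ S₂ = Set.univ)
    (hK : S₁ ∩ S₂ = Set.range v)
    (hS₁ : ∀ x y, G₁.Adj x y → x ∈ S₁ ∧ y ∈ S₁)
    (hS₂ : ∀ x y, G₂.Adj x y → x ∈ S₂ ∧ y ∈ S₂)
    (hclique₁ : ∀ i j : Fin k, i ≠ j → G₁.Adj (v i) (v j))
    (hclique₂ : ∀ i j : Fin k, i ≠ j → G₂.Adj (v i) (v j))
    (hGle : G ≤ G₁ ⊔ G₂)
    (hGge : ∀ x y, (G₁ ⊔ G₂).Adj x y →
      ¬(x ∈ Set.range v ∧ y ∈ Set.range v) → G.Adj x y)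
    (D₁' : Finset (V × V)) (hD₁' : IsOrientation (G ⊓ G₁) D₁')
    (hAT₁ : IsATOrientation D₁') (hΔ₁ : ∀ x, outDeg D₁' x ≤ ℓ)
    (D₂ : Finset (V × V)) (hD₂ : IsOrientation G₂ D₂)
    (hAT₂ : IsATOrientation D₂) (hΔ₂ : ∀ x, outDeg D₂ x ≤ ℓ)
    (hdegK : ∀ i : Fin k, outDeg D₂ (v i) = (i : ℕ)) :
    ∃ D : Finset (V × V), IsOrientation G D ∧ IsATOrientation D ∧
      (∀ x, outDeg D x ≤ ℓ) ∧ ∀ x ∈ S₁, outDeg D x = outDeg D₁' x := by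
  classical
  set Kf : Finset V := Finset.univ.image v with hKf
  have mem_Kf : ∀ x : V, x ∈ Kf ↔ ∃ i, v i = x := by
    intro x; simp [hKf]
  have noloop₂ : ∀ x, (x, x) ∉ D₂ := fun x h => (hD₂ x x).2 ⟨h, h⟩
  have arcS₂ : ∀ p ∈ D₂, p.1 ∈ S₂ ∧ p.2 ∈ S₂ := fun p hp =>
    hS₂ p.1 p.2 ((hD₂ p.1 p.2).1.mpr (Or.inl hp))
  have arcS₁ : ∀ p ∈ D₁', p.1 ∈ S₁ ∧ p.2 ∈ S₁ := fun p hp =>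
    hS₁ p.1 p.2 ((hD₁' p.1 p.2).1.mpr (Or.inl hp)).2
  have inK : ∀ x : V, x ∈ S₁ → x ∈ S₂ → x ∈ Kf := by
    intro x h1 h2
    have hx : x ∈ Set.range v := hK ▸ Set.mem_inter h1 h2
    obtain ⟨i, hi⟩ := hx
    exact (mem_Kf x).mpr ⟨i, hi⟩
  have Kf_sub : ∀ x ∈ Kf, x ∈ S₁ ∧ x ∈ S₂ := by
    intro x hx
    obtain ⟨i, hi⟩ := (mem_Kf x).mp hx
    have : x ∈ S₁ ∩ S₂ := hK ▸ ⟨i, hi⟩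
    exact this
  set B : Finset (V × V) := D₂.filter (fun p => ¬(p.1 ∈ Kf ∧ p.2 ∈ Kf)) with hBdef
  set T : Finset (V × V) := D₂.filter (fun p => p.1 ∈ Kf ∧ p.2 ∈ Kf) with hTdef
  have hBsub : B ⊆ D₂ := Finset.filter_subset _ _
  have hTsub : T ⊆ D₂ := Finset.filter_subset _ _
  -- counting block: outDeg B (v i) = 0 and outDeg T (v i) = i
  have einj : Function.Injective (fun q : Fin k × Fin k => (v q.1, v q.2)) := by
    intro a b hab
    simp only [Prod.mk.injEq] at hab
    exact Prod.ext (hv hab.1) (hv hab.2)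
  set Sp : Finset (Fin k × Fin k) := Finset.univ.filter (fun q => (v q.1, v q.2) ∈ D₂) with hSp
  have hTim : T = Sp.image (fun q => (v q.1, v q.2)) := by
    ext p
    constructor
    · intro hp
      rw [hTdef, Finset.mem_filter] at hp
      obtain ⟨hp2, h1, h2⟩ := hp
      obtain ⟨i, hi⟩ := (mem_Kf p.1).mp h1
      obtain ⟨j, hj⟩ := (mem_Kf p.2).mp h2
      refine Finset.mem_image.mpr ⟨(i, j), ?_, ?_⟩
      · rw [hSp, Finset.mem_filter]
        refine ⟨Finset.mem_univ _, ?_⟩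
        simp only [hi, hj]
        exact (show ((v i, v j) : V × V) = p from Prod.ext hi hj) ▸ hp2
      · exact Prod.ext hi hj
    · intro hp
      obtain ⟨q, hq, hqp⟩ := Finset.mem_image.mp hp
      rw [hSp, Finset.mem_filter] at hq
      rw [hTdef, Finset.mem_filter, ← hqp]
      exact ⟨hq.2, (mem_Kf _).mpr ⟨q.1, rfl⟩, (mem_Kf _).mpr ⟨q.2, rfl⟩⟩
  have cardT : T.card = Sp.card := by
    rw [hTim]; exact Finset.card_image_of_injective Sp einj
  have arcne : ∀ i j : Fin k, (v i, v j) ∈ D₂ → i ≠ j := by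
    intro i j h hij
    exact noloop₂ (v i) (hij ▸ h)
  have cover : (Finset.univ : Finset (Fin k)).offDiag = Sp ∪ Sp.image Prod.swap := by
    ext q
    rw [Finset.mem_offDiag, Finset.mem_union, Finset.mem_image]
    constructor
    · rintro ⟨-, -, hne⟩
      rcases (hD₂ (v q.1) (v q.2)).1.mp (hclique₂ q.1 q.2 hne) with h | h
      · exact Or.inl (by rw [hSp, Finset.mem_filter]; exact ⟨Finset.mem_univ _, h⟩)
      · refine Or.inr ⟨(q.2, q.1), ?_, rfl⟩
        rw [hSp, Finset.mem_filter]
        exact ⟨Finset.mem_univ _, h⟩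
    · rintro (h | ⟨r, hr, hrq⟩)
      · rw [hSp, Finset.mem_filter] at h
        exact ⟨Finset.mem_univ _, Finset.mem_univ _, arcne _ _ h.2⟩
      · rw [hSp, Finset.mem_filter] at hr
        refine ⟨Finset.mem_univ _, Finset.mem_univ _, ?_⟩
        rw [← hrq]
        exact fun hc => (arcne _ _ hr.2) hc.symm
  have disjSp : Disjoint Sp (Sp.image Prod.swap) := by
    rw [Finset.disjoint_left]
    rintro q h1 h2
    obtain ⟨r, hr, hrq⟩ := Finset.mem_image.mp h2
    rw [hSp, Finset.mem_filter] at h1 hr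
    have hq21 : (v q.2, v q.1) ∈ D₂ := by
      rw [← hrq]
      exact hr.2
    exact (hD₂ (v q.1) (v q.2)).2 ⟨h1.2, hq21⟩
  have cardSp2 : Sp.card * 2 = k * (k - 1) := by
    have h1 : (Finset.univ : Finset (Fin k)).offDiag.card = k * k - k := by
      rw [Finset.offDiag_card, Finset.card_univ, Fintype.card_fin]
    have h2 : (Sp.image Prod.swap).card = Sp.card :=
      Finset.card_image_of_injective Sp Prod.swap_injective
    have h3 := congrArg Finset.card cover
    rw [Finset.card_union_of_disjoint disjSp, h1, h2] at h3
    have hkk : k * (k - 1) + k = k * k := by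
      cases k with
      | zero => simp
      | succ n =>
        simp only [Nat.succ_sub_one]
        ring
    omega
  have sumD₂ : (∑ x ∈ Kf, outDeg D₂ x) * 2 = k * (k - 1) := by
    have h1 : ∑ x ∈ Kf, outDeg D₂ x = ∑ i : Fin k, outDeg D₂ (v i) := by
      rw [hKf]
      exact Finset.sum_image (fun a _ b _ hab => hv hab)
    have h2 : ∑ i : Fin k, outDeg D₂ (v i) = ∑ i ∈ Finset.range k, i := by
      rw [Finset.sum_congr rfl (fun i _ => hdegK i)]
      exact Fin.sum_univ_eq_sum_range (fun i => i) k
    rw [h1, h2]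
    exact Finset.sum_range_id_mul_two k
  have sumT : ∑ x ∈ Kf, outDeg T x = T.card := by
    exact (Finset.card_eq_sum_card_fiberwise (f := fun p : V × V => p.1)
      (fun p hp => ((Finset.mem_filter.mp hp).2).1)).symm
  have hle : ∀ x ∈ Kf, outDeg T x ≤ outDeg D₂ x := fun x _ => outDeg_mono hTsub x
  have hsum_eq : ∑ x ∈ Kf, outDeg T x = ∑ x ∈ Kf, outDeg D₂ x := by
    rw [sumT]
    omega
  have hpt : ∀ x ∈ Kf, outDeg T x = outDeg D₂ x :=
    (Finset.sum_eq_sum_iff_of_le hle).mp hsum_eq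
  have splitdeg : ∀ x, outDeg T x + outDeg B x = outDeg D₂ x := fun x =>
    outDeg_filter_split D₂ _ x
  have F5 : ∀ x ∈ Kf, outDeg B x = 0 := by
    intro x hx
    have := hpt x hx
    have := splitdeg x
    omega
  have scoreT : ∀ i : Fin k, outDeg T (v i) = (i : ℕ) := by
    intro i
    rw [hpt (v i) ((mem_Kf _).mpr ⟨i, rfl⟩), hdegK i]
  -- transitivity of the tournament on the clique
  have outset_card : ∀ i : Fin k,
      (Finset.univ.filter (fun j => (v i, v j) ∈ D₂)).card = (i : ℕ) := by
    intro i
    have hinj2 : Function.Injective (fun j : Fin k => ((v i, v j) : V × V)) := by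
      intro a b hab
      simp only [Prod.mk.injEq] at hab
      exact hv hab.2
    have him : T.filter (fun p => p.1 = v i) =
        (Finset.univ.filter (fun j => (v i, v j) ∈ D₂)).image (fun j => (v i, v j)) := by
      ext p
      constructor
      · intro hp
        rw [Finset.mem_filter] at hp
        obtain ⟨hpT, hp1⟩ := hp
        rw [hTdef, Finset.mem_filter] at hpT
        obtain ⟨hp2, -, h2⟩ := hpT
        obtain ⟨j, hj⟩ := (mem_Kf p.2).mp h2
        refine Finset.mem_image.mpr ⟨j, ?_, Prod.ext hp1.symm hj⟩
        rw [Finset.mem_filter]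
        refine ⟨Finset.mem_univ _, ?_⟩
        rw [show ((v i, v j) : V × V) = p from Prod.ext hp1.symm hj]
        exact hp2
      · intro hp
        obtain ⟨j, hj, hjp⟩ := Finset.mem_image.mp hp
        rw [Finset.mem_filter] at hj
        rw [Finset.mem_filter, ← hjp]
        refine ⟨?_, rfl⟩
        rw [hTdef, Finset.mem_filter]
        exact ⟨hj.2, (mem_Kf _).mpr ⟨i, rfl⟩, (mem_Kf _).mpr ⟨j, rfl⟩⟩
    have := congrArg Finset.card him
    rw [Finset.card_image_of_injective _ hinj2] at this
    have hod : outDeg T (v i) = (T.filter (fun p => p.1 = v i)).card := rfl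
    rw [← this, ← hod, scoreT i]
  have Qaux : ∀ n : ℕ, ∀ i : Fin k, k - (i : ℕ) ≤ n →
      ∀ j : Fin k, ((v i, v j) ∈ D₂ ↔ (j : ℕ) < (i : ℕ)) := by
    intro n
    induction n with
    | zero =>
      intro i hi
      exact absurd hi (by have := i.isLt; omega)
    | succ n IH =>
      intro i hi j
      have hsub : Finset.univ.filter (fun j => (v i, v j) ∈ D₂) ⊆
          Finset.Iio i := by
        intro l hl
        rw [Finset.mem_filter] at hl
        have harc := hl.2
        have hne : l ≠ i := Ne.symm (arcne i l harc)
        rw [Finset.mem_Iio, Fin.lt_def]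
        rcases lt_or_gt_of_ne hne with h | h
        · exact Fin.lt_def.mp h
        · exfalso
          have hil : (i : ℕ) < (l : ℕ) := Fin.lt_def.mp h
          have hIH := IH l (by have := i.isLt; have := l.isLt; omega) i
          have : (v l, v i) ∈ D₂ := hIH.mpr hil
          exact (hD₂ (v i) (v l)).2 ⟨harc, this⟩
      have heq : Finset.univ.filter (fun j => (v i, v j) ∈ D₂) = Finset.Iio i := by
        apply Finset.eq_of_subset_of_card_le hsub
        rw [Fin.card_Iio, outset_card i]
      constructor
      · intro harc
        have : j ∈ Finset.Iio i := heq ▸ Finset.mem_filter.mpr ⟨Finset.mem_univ _, harc⟩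
        exact Fin.lt_def.mp (Finset.mem_Iio.mp this)
      · intro hlt
        have : j ∈ Finset.univ.filter (fun j => (v i, v j) ∈ D₂) := by
          rw [heq, Finset.mem_Iio, Fin.lt_def]
          exact hlt
        exact (Finset.mem_filter.mp this).2
  have Q : ∀ i j : Fin k, ((v i, v j) ∈ D₂ ↔ (j : ℕ) < (i : ℕ)) :=
    fun i j => Qaux k i (Nat.sub_le k i) j
  -- every Eulerian subdigraph of D₂ avoids the clique arcs
  have E2 : ∀ H : Finset (V × V), H ⊆ D₂ → (∀ x, outDeg H x = inDeg H x) → H ⊆ B := by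
    intro H hsub hbal
    set HT : Finset (V × V) := H.filter (fun p => p.1 ∈ Kf ∧ p.2 ∈ Kf) with hHT
    set HO : Finset (V × V) := H.filter (fun p => ¬(p.1 ∈ Kf ∧ p.2 ∈ Kf)) with hHO
    have hHOB : HO ⊆ B := by
      rw [hHO, hBdef]
      exact Finset.filter_subset_filter _ hsub
    have hsplitH : ∀ x, outDeg HT x + outDeg HO x = outDeg H x := fun x =>
      outDeg_filter_split H _ x
    have hsplitH' : ∀ x, inDeg HT x + inDeg HO x = inDeg H x := fun x =>
      inDeg_filter_split H _ x
    have hHTarc : ∀ p ∈ HT, p.1 ∈ Kf ∧ p.2 ∈ Kf := fun p hp =>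
      (Finset.mem_filter.mp hp).2
    have hbalHO : ∀ x, outDeg HO x = inDeg HO x := by
      apply split_balanced (H := H) (W := Kf) _ _ hbal
      · intro x hx
        have h1 : outDeg HT x = 0 := outDeg_eq_zero (fun p hp h => hx (h ▸ (hHTarc p hp).1))
        have h2 : inDeg HT x = 0 := inDeg_eq_zero (fun p hp h => hx (h ▸ (hHTarc p hp).2))
        left
        constructor
        · have := hsplitH x; omega
        · have := hsplitH' x; omega
      · intro x hx
        have := outDeg_mono hHOB x
        have := F5 x hx
        omega
    have hbalHT : ∀ x, outDeg HT x = inDeg HT x := by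
      have hHTeq : HT = H \ HO := by
        ext p
        simp only [hHT, hHO, Finset.mem_filter, Finset.mem_sdiff]
        tauto
      rw [hHTeq]
      exact diff_balanced (Finset.filter_subset _ _) hbal hbalHO
    -- weight argument : HT is empty
    have hHTempty : HT = ∅ := by
      by_contra hne
      have hne' : HT.Nonempty := Finset.nonempty_of_ne_empty hne
      set g : V → ℕ := fun x => ∑ i : Fin k, if x = v i then (i : ℕ) else 0 with hg
      have gv : ∀ i : Fin k, g (v i) = (i : ℕ) := by
        intro i
        have hgi : g (v i) = ∑ j : Fin k, if v i = v j then (j : ℕ) else 0 := rfl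
        rw [hgi, Finset.sum_eq_single i (fun j _ hji => if_neg (fun h => hji ((hv h).symm)))
          (fun h => absurd (Finset.mem_univ i) h), if_pos rfl]
      have harcdec : ∀ p ∈ HT, g p.2 < g p.1 := by
        intro p hp
        obtain ⟨h1, h2⟩ := hHTarc p hp
        obtain ⟨i, hi⟩ := (mem_Kf p.1).mp h1
        obtain ⟨j, hj⟩ := (mem_Kf p.2).mp h2
        have hpD₂ : ((v i, v j) : V × V) ∈ D₂ := by
          rw [show ((v i, v j) : V × V) = p from Prod.ext hi hj]
          exact hsub (Finset.filter_subset _ _ hp)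
        have hji : (j : ℕ) < (i : ℕ) := (Q i j).mp hpD₂
        rw [← hi, ← hj, gv i, gv j]
        exact hji
      have hsum := balance_weight HT hbalHT g
      have hlt : ∑ p ∈ HT, g p.2 < ∑ p ∈ HT, g p.1 :=
        Finset.sum_lt_sum_of_nonempty hne' harcdec
      omega
    intro p hp
    rw [hBdef, Finset.mem_filter]
    refine ⟨hsub hp, ?_⟩
    intro hc
    have : p ∈ HT := Finset.mem_filter.mpr ⟨hp, hc⟩
    rw [hHTempty] at this
    exact absurd this (Finset.notMem_empty p)
  -- B is an AT-orientation
  have hEEB : EE D₂ = EE B := by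
    ext H
    simp only [EE, IsEulerianSub, Set.mem_setOf_eq]
    constructor
    · rintro ⟨⟨h1, h2⟩, h3⟩
      exact ⟨⟨E2 H h1 h2, h2⟩, h3⟩
    · rintro ⟨⟨h1, h2⟩, h3⟩
      exact ⟨⟨h1.trans hBsub, h2⟩, h3⟩
  have hOEB : OE D₂ = OE B := by
    ext H
    simp only [OE, IsEulerianSub, Set.mem_setOf_eq]
    constructor
    · rintro ⟨⟨h1, h2⟩, h3⟩
      exact ⟨⟨E2 H h1 h2, h2⟩, h3⟩
    · rintro ⟨⟨h1, h2⟩, h3⟩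
      exact ⟨⟨h1.trans hBsub, h2⟩, h3⟩
  have hATB : IsATOrientation B := by
    rw [IsATOrientation, ← hEEB, ← hOEB]
    exact hAT₂
  -- the combined orientation
  set D : Finset (V × V) := D₁' ∪ B with hD
  have arcB : ∀ p ∈ B, (p.1 ∈ S₂ ∧ p.2 ∈ S₂) ∧ ¬(p.1 ∈ Kf ∧ p.2 ∈ Kf) := by
    intro p hp
    rw [hBdef, Finset.mem_filter] at hp
    exact ⟨arcS₂ p hp.1, hp.2⟩
  have disjAB : Disjoint D₁' B := by
    rw [Finset.disjoint_left]
    intro p h1 h2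
    obtain ⟨hS2, hnK⟩ := arcB p h2
    obtain ⟨hS1a, hS1b⟩ := arcS₁ p h1
    exact hnK ⟨inK _ hS1a hS2.1, inK _ hS1b hS2.2⟩
  have houtD : ∀ x, outDeg D x = outDeg D₁' x + outDeg B x := fun x =>
    outDeg_union disjAB x
  have hBzeroS₁ : ∀ x ∈ S₁, outDeg B x = 0 := by
    intro x hx
    by_cases hxK : x ∈ Kf
    · exact F5 x hxK
    · apply outDeg_eq_zero
      intro p hp h
      exact hxK (inK x hx (h ▸ (arcB p hp).1.1))
  have hdegS₁ : ∀ x ∈ S₁, outDeg D x = outDeg D₁' x := by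
    intro x hx
    rw [houtD x, hBzeroS₁ x hx, Nat.add_zero]
  have hΔ : ∀ x, outDeg D x ≤ ℓ := by
    intro x
    by_cases hx : x ∈ S₁
    · rw [hdegS₁ x hx]; exact hΔ₁ x
    · have hxS₂ : x ∈ S₂ := by
        have h2 : x ∈ S₁ ∪ S₂ := hcover ▸ Set.mem_univ x
        exact ((Set.mem_union x S₁ S₂).mp h2).resolve_left hx
      have h1 : outDeg D₁' x = 0 := outDeg_eq_zero (fun p hp h => hx (h ▸ (arcS₁ p hp).1))
      rw [houtD x, h1]
      have := outDeg_mono hBsub x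
      have := hΔ₂ x
      omega
  -- range v vs Kf
  have hrange : ∀ x : V, x ∈ Set.range v ↔ x ∈ Kf := by
    intro x
    rw [mem_Kf]
    rfl
  -- orientation of G
  have hOrient : IsOrientation G D := by
    intro x y
    constructor
    · constructor
      · intro h
        by_cases hg1 : G₁.Adj x y
        · have hadj : (G ⊓ G₁).Adj x y := ⟨h, hg1⟩
          rcases (hD₁' x y).1.mp hadj with harc | harc
          · exact Or.inl (Finset.mem_union_left _ harc)
          · exact Or.inr (Finset.mem_union_left _ harc)
        · have hg2 : G₂.Adj x y := by
            rcases hGle h with h' | h'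
            · exact absurd h' hg1
            · exact h'
          have hnK : ¬(x ∈ Kf ∧ y ∈ Kf) := by
            rintro ⟨hxK, hyK⟩
            obtain ⟨i, hi⟩ := (mem_Kf x).mp hxK
            obtain ⟨j, hj⟩ := (mem_Kf y).mp hyK
            have hij : i ≠ j := fun hc => h.ne (hi ▸ hj ▸ hc ▸ rfl)
            exact hg1 (hi ▸ hj ▸ hclique₁ i j hij)
          rcases (hD₂ x y).1.mp hg2 with harc | harc
          · refine Or.inl (Finset.mem_union_right _ ?_)
            rw [hBdef, Finset.mem_filter]
            exact ⟨harc, hnK⟩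
          · refine Or.inr (Finset.mem_union_right _ ?_)
            rw [hBdef, Finset.mem_filter]
            exact ⟨harc, fun hc => hnK ⟨hc.2, hc.1⟩⟩
      · intro h
        rcases h with h | h
        · rcases Finset.mem_union.mp h with h' | h'
          · exact ((hD₁' x y).1.mpr (Or.inl h')).1
          · obtain ⟨-, hnK⟩ := arcB (x, y) h'
            have hg2 : G₂.Adj x y := (hD₂ x y).1.mpr (Or.inl ((Finset.filter_subset _ _) h'))
            apply hGge x y (Or.inr hg2)
            rintro ⟨hx, hy⟩
            exact hnK ⟨(hrange x).mp hx, (hrange y).mp hy⟩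
        · rcases Finset.mem_union.mp h with h' | h'
          · exact ((hD₁' x y).1.mpr (Or.inr h')).1
          · obtain ⟨-, hnK⟩ := arcB (y, x) h'
            have hg2 : G₂.Adj x y := (hD₂ x y).1.mpr (Or.inr ((Finset.filter_subset _ _) h'))
            apply hGge x y (Or.inr hg2)
            rintro ⟨hx, hy⟩
            exact hnK ⟨(hrange y).mp hy, (hrange x).mp hx⟩
    · rintro ⟨h1, h2⟩
      rcases Finset.mem_union.mp h1 with ha | ha <;> rcases Finset.mem_union.mp h2 with hb | hb
      · exact (hD₁' x y).2 ⟨ha, hb⟩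
      · obtain ⟨hS2, hnK⟩ := arcB (y, x) hb
        obtain ⟨hS1a, hS1b⟩ := arcS₁ (x, y) ha
        exact hnK ⟨inK _ hS1b hS2.1, inK _ hS1a hS2.2⟩
      · obtain ⟨hS2, hnK⟩ := arcB (x, y) ha
        obtain ⟨hS1a, hS1b⟩ := arcS₁ (y, x) hb
        exact hnK ⟨inK _ hS1b hS2.1, inK _ hS1a hS2.2⟩
      · exact (hD₂ x y).2 ⟨hBsub ha, hBsub hb⟩
  -- AT property of D
  have hsplitD : ∀ H, H ⊆ D₁' ∪ B → (∀ x, outDeg H x = inDeg H x) →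
      ∀ x, outDeg (H ∩ B) x = inDeg (H ∩ B) x := by
    intro H hsub hbal
    have hHB : ∀ p ∈ H ∩ B, p ∈ B := fun p hp => Finset.mem_inter.mp hp |>.2
    have hHA : ∀ p ∈ H, p ∉ B → p ∈ D₁' := by
      intro p hp hnp
      rcases Finset.mem_union.mp (hsub hp) with h | h
      · exact h
      · exact absurd h hnp
    apply split_balanced (H := H) (W := Kf) _ _ hbal
    · intro x hx
      by_cases hxS₁ : x ∈ S₁
      · right
        have hxS₂ : x ∉ S₂ := fun hc => hx (inK x hxS₁ hc)
        constructor
        · exact outDeg_eq_zero (fun p hp h => hxS₂ (h ▸ (arcB p (hHB p hp)).1.1))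
        · exact inDeg_eq_zero (fun p hp h => hxS₂ (h ▸ (arcB p (hHB p hp)).1.2))
      · left
        -- all arcs of H at x are in B
        have hfil : H ∩ B = H.filter (fun p => p ∈ B) := by
          ext p
          simp [Finset.mem_inter, Finset.mem_filter]
        have ho := outDeg_filter_split H (fun p => p ∈ B) x
        have hi := inDeg_filter_split H (fun p => p ∈ B) x
        have hzo : outDeg (H.filter fun p => ¬ p ∈ B) x = 0 := by
          apply outDeg_eq_zero
          intro p hp h
          rw [Finset.mem_filter] at hp
          exact hxS₁ (h ▸ (arcS₁ p (hHA p hp.1 hp.2)).1)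
        have hzi : inDeg (H.filter fun p => ¬ p ∈ B) x = 0 := by
          apply inDeg_eq_zero
          intro p hp h
          rw [Finset.mem_filter] at hp
          exact hxS₁ (h ▸ (arcS₁ p (hHA p hp.1 hp.2)).2)
        rw [hfil]
        omega
    · intro x hx
      have h1 : H ∩ B ⊆ B := Finset.inter_subset_right
      have := outDeg_mono h1 x
      have := F5 x hx
      omega
  have hATD : IsATOrientation D := AT_union disjAB hsplitD hAT₁ hATB
  exact ⟨D, hOrient, hATD, hΔ, hdegS₁⟩
end

section
/- Let $G$ be a graph obtained as a $k$-clique-sum of vertex-disjoint graphs $G_1$ and $G_2$ with $k \ge 1$ and common clique $K = \{v_1, \dots, v_k\}$, let $G_i' = G_i \cap G$ for $i = 1, 2$, let $D_1'$ be an orientation of $G_1'$, let $D_2$ be an orientation of $G_2$ with $d_{D_2}^+(v_i) = i - 1$ for $i = 1, \dots, k$ (so that $D_2$ has no arc from $K$ to $V(G_2) \setminus K$), let $D_2'$ be the restriction of $D_2$ to $G_2 - E(G[K])$, and let $D = D_1' \cup D_2'$ be the induced orientation of $G$. Then every Eulerian subdigraph $H$ of $D$ contains no arc from $V(G_2) \setminus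 K$ to $K$. -/
/-! The out-degrees `0, 1, …, k - 1` of the clique vertices in `D₂` add up to `k(k-1)/2`, the
number of arcs of `D₂` inside the clique, so every arc of `D₂` leaving a clique vertex stays in
the clique. Hence in `D` an arc whose head lies in `A = V(G₂) \ K` has its tail in `A` as well:
arcs of `D₁'` end in `V(G₁)`, and arcs of `D₂'` with head outside `K` cannot start in `K`.
In an Eulerian subdigraph `H` as many arcs leave `A` as enter it; since every arc entering `A`
also leaves it, every arc leaving `A` enters it, so no arc of `H` goes from `A` to `K`. -/

open Finset

section Orientations

variable {V : Type*}

theorem IsOrientation.adj_of_mem {G : SimpleGraph V} {D : Finset (V × V)}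
    (hD : IsOrientation G D) {x y : V} (h : (x, y) ∈ D) : G.Adj x y :=
  (hD x y).1.mpr (Or.inl h)

variable [DecidableEq V]

theorem card_filter_fst_mem_eq_sum_outDeg (D : Finset (V × V)) (A : Finset V) :
    #{p ∈ D | p.1 ∈ A} = ∑ x ∈ A, outDeg D x := by
  rw [card_eq_sum_card_fiberwise (s := {p ∈ D | p.1 ∈ A}) (f := Prod.fst) (t := A)
    fun p hp => (mem_filter.mp hp).2]
  refine sum_congr rfl fun x hx => ?_
  rw [outDeg, filter_filter]
  exact congrArg card (filter_congr fun p _ => ⟨And.right, fun h => ⟨h ▸ hx, h⟩⟩)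

theorem card_filter_snd_mem_eq_sum_inDeg (D : Finset (V × V)) (A : Finset V) :
    #{p ∈ D | p.2 ∈ A} = ∑ x ∈ A, inDeg D x := by
  rw [card_eq_sum_card_fiberwise (s := {p ∈ D | p.2 ∈ A}) (f := Prod.snd) (t := A)
    fun p hp => (mem_filter.mp hp).2]
  refine sum_congr rfl fun x hx => ?_
  rw [inDeg, filter_filter]
  exact congrArg card (filter_congr fun p _ => ⟨And.right, fun h => ⟨h ▸ hx, h⟩⟩)

/-- An orientation of a clique on `K` is a tournament: exactly one of `(x, y)`, `(y, x)` is an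
arc for each pair of distinct vertices of `K`. -/
theorem IsOrientation.card_filter_mem_of_isClique {G : SimpleGraph V} {D : Finset (V × V)}
    (hD : IsOrientation G D) {K : Finset V} (hK : G.IsClique (K : Set V)) :
    #{p ∈ D | p.1 ∈ K ∧ p.2 ∈ K} = (#K).choose 2 := by
  set T := {p ∈ D | p.1 ∈ K ∧ p.2 ∈ K}
  have hunion : T ∪ T.image Prod.swap = K.offDiag := by
    ext ⟨x, y⟩
    simp only [T, mem_union, mem_image, mem_filter, mem_offDiag, Prod.exists,
      Prod.swap_prod_mk, Prod.mk.injEq]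
    constructor
    · rintro (⟨h, hx, hy⟩ | ⟨a, b, ⟨h, ha, hb⟩, rfl, rfl⟩)
      · exact ⟨hx, hy, (hD.adj_of_mem h).ne⟩
      · exact ⟨hb, ha, (hD.adj_of_mem h).ne.symm⟩
    · rintro ⟨hx, hy, hxy⟩
      rcases (hD x y).1.mp (hK hx hy hxy) with h | h
      · exact Or.inl ⟨h, hx, hy⟩
      · exact Or.inr ⟨y, x, ⟨h, hy, hx⟩, rfl, rfl⟩
  have hdisj : Disjoint T (T.image Prod.swap) := by
    rw [disjoint_left]
    intro p hp hp'
    obtain ⟨⟨a, b⟩, hab, rfl⟩ := mem_image.mp hp'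
    exact (hD b a).2 ⟨(mem_filter.mp hp).1, (mem_filter.mp hab).1⟩
  have hcard := congrArg card hunion
  rw [card_union_of_disjoint hdisj, card_image_of_injective _ Prod.swap_injective,
    offDiag_card, ← Nat.mul_sub_one] at hcard
  rw [Nat.choose_two_right]
  omega

/-- The arcs with tail in `K` include the `|K| choose 2` arcs inside `K`. -/
theorem IsOrientation.snd_mem_of_sum_outDeg_le {G : SimpleGraph V} {D : Finset (V × V)}
    (hD : IsOrientation G D) {K : Finset V} (hK : G.IsClique (K : Set V))
    (hdeg : ∑ x ∈ K, outDeg D x ≤ (#K).choose 2) :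
    ∀ p ∈ D, p.1 ∈ K → p.2 ∈ K := by
  have hsub : {p ∈ D | p.1 ∈ K ∧ p.2 ∈ K} ⊆ {p ∈ D | p.1 ∈ K} :=
    monotone_filter_right D fun _ _ => And.left
  have heq := eq_of_subset_of_card_le hsub (by
    rw [hD.card_filter_mem_of_isClique hK, card_filter_fst_mem_eq_sum_outDeg]
    exact hdeg)
  intro p hp h1
  have : p ∈ {p ∈ D | p.1 ∈ K ∧ p.2 ∈ K} := heq ▸ mem_filter.mpr ⟨hp, h1⟩
  exact (mem_filter.mp this).2.2

theorem snd_mem_of_forall_outDeg_eq_inDeg {H : Finset (V × V)}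
    (hH : ∀ x, outDeg H x = inDeg H x) {A : Finset V} (hA : ∀ p ∈ H, p.2 ∈ A → p.1 ∈ A) :
    ∀ p ∈ H, p.1 ∈ A → p.2 ∈ A := by
  have hsub : {p ∈ H | p.2 ∈ A} ⊆ {p ∈ H | p.1 ∈ A} :=
    monotone_filter_right H hA
  have heq := eq_of_subset_of_card_le hsub (by
    rw [card_filter_fst_mem_eq_sum_outDeg, card_filter_snd_mem_eq_sum_inDeg]
    exact (sum_congr rfl fun x _ => hH x).le)
  intro p hp h1
  have : p ∈ {p ∈ H | p.2 ∈ A} := heq ▸ mem_filter.mpr ⟨hp, h1⟩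
  exact (mem_filter.mp this).2

end Orientations

open scoped Classical in
theorem cliqueSum_eulerian_no_arc_into_clique_general {V : Type*} [Fintype V] [DecidableEq V]
    (k : ℕ)
    (G G₁ G₂ : SimpleGraph V) (S₁ S₂ : Set V) (v : Fin k → V)
    (hv : Function.Injective v)
    (hK : S₁ ∩ S₂ = Set.range v)
    (hS₁ : ∀ x y, G₁.Adj x y → x ∈ S₁ ∧ y ∈ S₁)
    (hS₂ : ∀ x y, G₂.Adj x y → x ∈ S₂ ∧ y ∈ S₂)
    (hclique₂ : ∀ i j : Fin k, i ≠ j → G₂.Adj (v i) (v j))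
    (D₁' : Finset (V × V)) (hD₁' : IsOrientation (G ⊓ G₁) D₁')
    (D₂ : Finset (V × V)) (hD₂ : IsOrientation G₂ D₂)
    (hdegK : ∀ i : Fin k, outDeg D₂ (v i) = (i : ℕ))
    (D₂' : Finset (V × V))
    (hD₂' : D₂' = D₂.filter fun p => p.1 ∉ Set.range v ∨ p.2 ∉ Set.range v)
    (D : Finset (V × V)) (hD : D = D₁' ∪ D₂')
    (H : Finset (V × V)) (hH : IsEulerianSub D H) :
    ∀ x y : V, x ∈ S₂ → x ∉ Set.range v → y ∈ Set.range v → (x, y) ∉ H := by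
  classical
  set K : Finset V := univ.image v
  have hmemK : ∀ x, x ∈ K ↔ x ∈ Set.range v := by simp [K]
  have hK_clique : G₂.IsClique (K : Set V) := by
    rintro _ hx _ hy hxy
    obtain ⟨i, -, rfl⟩ := mem_image.mp hx
    obtain ⟨j, -, rfl⟩ := mem_image.mp hy
    exact hclique₂ i j fun h => hxy (congrArg v h)
  have hK_outDeg : ∑ x ∈ K, outDeg D₂ x = (#K).choose 2 := by
    rw [sum_image fun i _ j _ h => hv h, card_image_of_injective _ hv, card_univ,
      Fintype.card_fin, Nat.choose_two_right, ← sum_range_id, ← Fin.sum_univ_eq_sum_range]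
    exact sum_congr rfl fun i _ => hdegK i
  have hK_closed := hD₂.snd_mem_of_sum_outDeg_le hK_clique hK_outDeg.le
  set A : Finset V := {x | x ∈ S₂ ∧ x ∉ Set.range v}
  have hA_closed : ∀ p ∈ H, p.2 ∈ A → p.1 ∈ A := by
    rintro ⟨x, y⟩ hp hy
    simp only [A, mem_filter, mem_univ, true_and] at hy ⊢
    rcases mem_union.mp (hD ▸ hH.1 hp) with h | h
    · exact absurd (hK ▸ ⟨(hS₁ x y (hD₁'.adj_of_mem h).2).2, hy.1⟩) hy.2
    · rw [hD₂', mem_filter] at h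
      refine ⟨(hS₂ x y (hD₂.adj_of_mem h.1)).1, fun hx => hy.2 ?_⟩
      exact (hmemK y).mp (hK_closed _ h.1 ((hmemK x).mpr hx))
  intro x y hx hxK hy hxy
  have hyA := snd_mem_of_forall_outDeg_eq_inDeg hH.2 hA_closed (x, y) hxy
    (mem_filter.mpr ⟨mem_univ x, hx, hxK⟩)
  exact (mem_filter.mp hyA).2.2 hy

open scoped Classical in
/-- Let `G` be a `k`-clique-sum (`k ≥ 1`) of graphs `G₁`, `G₂` on vertex sets `S₁`, `S₂`
with common clique `K = {v 0, …, v (k-1)} = S₁ ∩ S₂`, let `D₁'` be an orientation of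
`G₁' = G ⊓ G₁`, let `D₂` be an orientation of `G₂` with `d⁺_{D₂}(v i) = i` for each `i`
(so `D₂` has no arc from `K` to `V(G₂) \ K`), let `D₂'` be the restriction of `D₂` to
`G₂ - E(G[K])`, and let `D = D₁' ∪ D₂'` be the induced orientation of `G`. Then every
Eulerian subdigraph `H` of `D` contains no arc from `V(G₂) \ K` to `K`. -/
theorem cliqueSum_eulerian_no_arc_into_clique {V : Type*} [Fintype V] [DecidableEq V]
    (k : ℕ) (hk : 1 ≤ k)
    (G G₁ G₂ : SimpleGraph V) (S₁ S₂ : Set V) (v : Fin k → V)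
    (hv : Function.Injective v)
    (hcover : S₁ ∪ S₂ = Set.univ)
    (hK : S₁ ∩ S₂ = Set.range v)
    (hS₁ : ∀ x y, G₁.Adj x y → x ∈ S₁ ∧ y ∈ S₁)
    (hS₂ : ∀ x y, G₂.Adj x y → x ∈ S₂ ∧ y ∈ S₂)
    (hclique₁ : ∀ i j : Fin k, i ≠ j → G₁.Adj (v i) (v j))
    (hclique₂ : ∀ i j : Fin k, i ≠ j → G₂.Adj (v i) (v j))
    (hGle : G ≤ G₁ ⊔ G₂)
    (hGge : ∀ x y, (G₁ ⊔ G₂).Adj x y →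
      ¬(x ∈ Set.range v ∧ y ∈ Set.range v) → G.Adj x y)
    (D₁' : Finset (V × V)) (hD₁' : IsOrientation (G ⊓ G₁) D₁')
    (D₂ : Finset (V × V)) (hD₂ : IsOrientation G₂ D₂)
    (hdegK : ∀ i : Fin k, outDeg D₂ (v i) = (i : ℕ))
    (D₂' : Finset (V × V))
    (hD₂' : D₂' = D₂.filter fun p => p.1 ∉ Set.range v ∨ p.2 ∉ Set.range v)
    (D : Finset (V × V)) (hD : D = D₁' ∪ D₂')
    (hDG : IsOrientation G D)
    (H : Finset (V × V)) (hH : IsEulerianSub D H) :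
    ∀ x y : V, x ∈ S₂ → x ∉ Set.range v → y ∈ Set.range v → (x, y) ∉ H :=
  cliqueSum_eulerian_no_arc_into_clique_general k G G₁ G₂ S₁ S₂ v hv hK hS₁ hS₂ hclique₂ D₁' hD₁' D₂
    hD₂ hdegK D₂' hD₂' D hD H hH
end

section
/- Let $G = K_{3,3}$ with color classes $\{u_1, u_2, u_3\}$ and $\{v_1, v_2, v_3\}$. Then there exists a matching $M$ of $G$ (namely $M = \{u_1v_1, u_2v_2, u_3v_3\}$) and an acyclic (hence AT-) orientation $D$ of $G - M$ such that $\Delta^+(D) \le 2$ and $d_D^+(u_1) = d_D^+(v_1) = 0$. -/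
/-- A simple graph is a matching if every vertex has at most one neighbour. -/
def IsMatchingGraph {V : Type*} (M : SimpleGraph V) : Prop :=
  ∀ x : V, (M.neighborSet x).Subsingleton

/-- The complete bipartite graph `K_{3,3}`. -/
def K33 : SimpleGraph (Fin 3 ⊕ Fin 3) := completeBipartiteGraph (Fin 3) (Fin 3)

/-!
An orientation carrying a potential `f` that increases strictly along every arc is acyclic, and
it has no nonempty Eulerian subdigraph `H`: the head of an arc of `H` with maximal potential has
positive in-degree in `H`, hence positive out-degree, and the outgoing arc leads to a vertex of
still larger potential. So `EE(D) = {∅}` and `OE(D) = ∅`, and `D` is an AT-orientation.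

For `K_{3,3}` minus the perfect matching `{uᵢvᵢ}`, orient every edge upwards along the levels
`{u₂, u₃} < {v₂, v₃} < {u₁, v₁}`.
-/

section Potential

variable {V : Type*} {D : Finset (V × V)} (f : V → ℕ)

theorem isAcyclicOrientation_of_potential (hf : ∀ p ∈ D, f p.1 < f p.2) :
    IsAcyclicOrientation D := by
  rintro ⟨n, c, hn, hcycle, hstep⟩
  have hgrowth : ∀ i ≤ n, f (c 0) + i ≤ f (c i) := by
    intro i
    induction i with
    | zero => simp
    | succ k ih =>
      intro hk
      have : f (c k) < f (c (k + 1)) := hf _ (hstep k hk)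
      have := ih (k.le_succ.trans hk)
      omega
  have := hgrowth n le_rfl
  rw [hcycle] at this
  omega

variable [DecidableEq V]

theorem inDeg_pos_of_mem {H : Finset (V × V)} {p : V × V} (hp : p ∈ H) : 0 < inDeg H p.2 :=
  Finset.card_pos.2 ⟨p, Finset.mem_filter.2 ⟨hp, rfl⟩⟩

theorem IsEulerianSub.eq_empty_of_potential {H : Finset (V × V)} (hH : IsEulerianSub D H)
    (hf : ∀ p ∈ D, f p.1 < f p.2) : H = ∅ := by
  by_contra hne
  obtain ⟨p, hp, hmax⟩ := H.exists_max_image (fun p => f p.2) (Finset.nonempty_iff_ne_empty.2 hne)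
  have hout : 0 < outDeg H p.2 := hH.2 p.2 ▸ inDeg_pos_of_mem hp
  obtain ⟨q, hq⟩ := Finset.card_pos.1 hout
  obtain ⟨hqH, hqp⟩ := Finset.mem_filter.1 hq
  have hlt : f p.2 < f q.2 := hqp ▸ hf q (hH.1 hqH)
  exact (hmax q hqH).not_gt hlt

theorem EE_eq_singleton_empty_of_potential (hf : ∀ p ∈ D, f p.1 < f p.2) : EE D = {∅} := by
  ext H
  refine ⟨fun hH => hH.1.eq_empty_of_potential f hf, ?_⟩
  rintro rfl
  exact ⟨⟨Finset.empty_subset D, fun _ => rfl⟩, Even.zero⟩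

theorem OE_eq_empty_of_potential (hf : ∀ p ∈ D, f p.1 < f p.2) : OE D = ∅ := by
  ext H
  refine ⟨fun hH => ?_, False.elim⟩
  have hodd := hH.2
  rw [hH.1.eq_empty_of_potential f hf] at hodd
  exact Nat.not_odd_zero hodd

theorem isATOrientation_of_potential (hf : ∀ p ∈ D, f p.1 < f p.2) : IsATOrientation D := by
  rw [IsATOrientation, EE_eq_singleton_empty_of_potential f hf, OE_eq_empty_of_potential f hf]
  simp

end Potential

def diagonalMatching (α : Type*) : SimpleGraph (α ⊕ α) :=
  SimpleGraph.fromRel fun x y => ∃ i : α, x = Sum.inl i ∧ y = Sum.inr i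

section DiagonalMatching

variable {α : Type*}

@[simp]
theorem diagonalMatching_adj_inl {i : α} {y : α ⊕ α} :
    (diagonalMatching α).Adj (Sum.inl i) y ↔ y = Sum.inr i := by
  cases y <;> simp [diagonalMatching, eq_comm]

@[simp]
theorem diagonalMatching_adj_inr {i : α} {y : α ⊕ α} :
    (diagonalMatching α).Adj (Sum.inr i) y ↔ y = Sum.inl i := by
  cases y <;> simp [diagonalMatching, eq_comm]

theorem diagonalMatching_le_completeBipartiteGraph :
    diagonalMatching α ≤ completeBipartiteGraph α α := by
  rintro (i | i) y h <;> simp_all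

theorem isMatchingGraph_diagonalMatching : IsMatchingGraph (diagonalMatching α) := by
  rintro (i | i) y hy z hz <;> simp_all [SimpleGraph.mem_neighborSet]

end DiagonalMatching

def k33Orientation : Finset ((Fin 3 ⊕ Fin 3) × (Fin 3 ⊕ Fin 3)) :=
  {(.inr 1, .inl 0), (.inr 2, .inl 0), (.inl 1, .inr 0),
   (.inl 2, .inr 0), (.inl 1, .inr 2), (.inl 2, .inr 1)}

def k33Level : Fin 3 ⊕ Fin 3 → ℕ
  | .inl 0 | .inr 0 => 2
  | .inl _ => 0
  | .inr _ => 1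

theorem k33Level_lt : ∀ p ∈ k33Orientation, k33Level p.1 < k33Level p.2 := by
  decide

theorem isOrientation_k33Orientation :
    IsOrientation (K33 \ diagonalMatching (Fin 3)) k33Orientation := by
  unfold IsOrientation
  simp only [SimpleGraph.sdiff_adj, K33, completeBipartiteGraph_adj, diagonalMatching,
    SimpleGraph.fromRel_adj]
  decide

/-- Let `G = K_{3,3}` with color classes `{u₁,u₂,u₃}` (the left copy of `Fin 3`) and
`{v₁,v₂,v₃}` (the right copy). There exist a matching `M` of `G`, namely
`M = {u₁v₁, u₂v₂, u₃v₃}`, and an acyclic (hence AT-) orientation `D` of `G - M`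
with `Δ⁺(D) ≤ 2` and `d⁺_D(u₁) = d⁺_D(v₁) = 0`. -/
theorem K33_matching_acyclic_orientation :
    ∃ M : SimpleGraph (Fin 3 ⊕ Fin 3),
      M = SimpleGraph.fromRel (fun x y => ∃ i : Fin 3, x = Sum.inl i ∧ y = Sum.inr i) ∧
      M ≤ K33 ∧ IsMatchingGraph M ∧
      ∃ D : Finset ((Fin 3 ⊕ Fin 3) × (Fin 3 ⊕ Fin 3)),
        IsOrientation (K33 \ M) D ∧ IsAcyclicOrientation D ∧ IsATOrientation D ∧
        (∀ x, outDeg D x ≤ 2) ∧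
        outDeg D (Sum.inl 0) = 0 ∧ outDeg D (Sum.inr 0) = 0 :=
  ⟨diagonalMatching (Fin 3), rfl, diagonalMatching_le_completeBipartiteGraph,
    isMatchingGraph_diagonalMatching, k33Orientation, isOrientation_k33Orientation,
    isAcyclicOrientation_of_potential k33Level k33Level_lt,
    isATOrientation_of_potential k33Level k33Level_lt, by decide, by decide, by decide⟩
end
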